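/- The van Genuchten–Mualem relative permeability, expressed as a function of pressure head, is not differentiable at ψ = 0 when 1 < n < 2: the one-sided derivative dK_r/dψ as ψ → 0⁻ is unbounded for 1 < n < 2, while it is finite for n ≥ 2. -/

import Mathlib

/-!
Put `t = α|ψ|`. Then `K_r = G(t^(n-1), t^n)` with `G(u, v) = (1 - u (1+v)^(-m))² / (1+v)^(m/2)`
smooth near `(0, 0)` and `∂G/∂u (0, 0) = -2`, so by the chain rule
`dK_r/dt = (n-1) t^(n-2) (-2 + o(1)) + n t^(n-1) O(1)` as `t → 0⁺`. The first term tends to `-∞`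
when `n < 2` and is continuous at `0` when `n ≥ 2`; the second tends to `0` since `n > 1`.
-/

open Set Filter Topology

noncomputable def mualemKr (n m t : ℝ) : ℝ :=
  (1 - t ^ (n - 1) * (1 + t ^ n) ^ (-m)) ^ 2 / (1 + t ^ n) ^ (m / 2)

noncomputable def mualemKrDerivLead (n m t : ℝ) : ℝ :=
  -2 * (1 - t ^ (n - 1) * (1 + t ^ n) ^ (-m)) * (1 + t ^ n) ^ (-m) / (1 + t ^ n) ^ (m / 2)

noncomputable def mualemKrDerivRest (n m t : ℝ) : ℝ :=
  2 * (1 - t ^ (n - 1) * (1 + t ^ n) ^ (-m)) * t ^ (n - 1) * m * (1 + t ^ n) ^ (-m - 1)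
      / (1 + t ^ n) ^ (m / 2)
    - (1 - t ^ (n - 1) * (1 + t ^ n) ^ (-m)) ^ 2 * (m / 2) * (1 + t ^ n) ^ (m / 2 - 1)
      / ((1 + t ^ n) ^ (m / 2)) ^ 2

/-- `mualemKrDerivLead` and `mualemKrDerivRest` are `∂G/∂u` and `∂G/∂v` at `(t^(n-1), t^n)`. -/
noncomputable def mualemKrDeriv (n m t : ℝ) : ℝ :=
  (n - 1) * t ^ (n - 2) * mualemKrDerivLead n m t + n * t ^ (n - 1) * mualemKrDerivRest n m t

section

variable {n m t : ℝ}

theorem hasDerivAt_mualemKr (ht : 0 < t) :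
    HasDerivAt (mualemKr n m) (mualemKrDeriv n m t) t := by
  have hB : 0 < 1 + t ^ n := by positivity
  have hu : HasDerivAt (fun s : ℝ => s ^ (n - 1)) ((n - 1) * t ^ (n - 2)) t := by
    rw [show n - 2 = n - 1 - 1 by ring]
    exact Real.hasDerivAt_rpow_const (.inl ht.ne')
  have hv : HasDerivAt (fun s : ℝ => 1 + s ^ n) (n * t ^ (n - 1)) t :=
    (Real.hasDerivAt_rpow_const (.inl ht.ne')).const_add 1
  have hP := (hu.mul (hv.rpow_const (p := -m) (.inl hB.ne'))).const_sub 1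
  have hK := (hP.pow 2).div (hv.rpow_const (p := m / 2) (.inl hB.ne')) (by positivity)
  refine hK.congr_deriv ?_
  simp only [mualemKrDeriv, mualemKrDerivLead, mualemKrDerivRest, Pi.mul_apply, Pi.pow_apply]
  field_simp
  ring

theorem continuousAt_mualemKrDerivLead (hn : 1 ≤ n) :
    ContinuousAt (mualemKrDerivLead n m) 0 := by
  unfold mualemKrDerivLead
  fun_prop (disch := first | linarith | simp [Real.zero_rpow (by linarith : n ≠ 0)])

theorem continuousAt_mualemKrDerivRest (hn : 1 ≤ n) :
    ContinuousAt (mualemKrDerivRest n m) 0 := by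
  unfold mualemKrDerivRest
  fun_prop (disch := first | linarith | simp [Real.zero_rpow (by linarith : n ≠ 0)])

theorem mualemKrDerivLead_zero (hn : 1 < n) : mualemKrDerivLead n m 0 = -2 := by
  simp [mualemKrDerivLead, Real.zero_rpow (by linarith : n ≠ 0),
    Real.zero_rpow (by linarith : n - 1 ≠ 0)]

theorem tendsto_mualemKrDeriv_atBot (hn : 1 < n) (hn2 : n < 2) :
    Tendsto (mualemKrDeriv n m) (𝓝[>] 0) atBot := by
  have hLead : Tendsto (mualemKrDerivLead n m) (𝓝[>] 0) (𝓝 (-2)) :=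
    mualemKrDerivLead_zero (m := m) hn ▸
      (continuousAt_mualemKrDerivLead hn.le).tendsto.mono_left nhdsWithin_le_nhds
  have hRest : ContinuousAt (fun t => n * t ^ (n - 1) * mualemKrDerivRest n m t) 0 := by
    have := continuousAt_mualemKrDerivRest (m := m) hn.le
    fun_prop (disch := linarith)
  have hSing : Tendsto (fun t : ℝ => (n - 1) * t ^ (n - 2)) (𝓝[>] 0) atTop :=
    (tendsto_rpow_neg_nhdsGT_zero (by linarith)).const_mul_atTop (by linarith)
  exact (hSing.atTop_mul_neg (by norm_num) hLead).atBot_add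
    (hRest.tendsto.mono_left nhdsWithin_le_nhds)

theorem continuousAt_mualemKrDeriv (hn : 2 ≤ n) : ContinuousAt (mualemKrDeriv n m) 0 := by
  have := continuousAt_mualemKrDerivLead (m := m) (by linarith)
  have := continuousAt_mualemKrDerivRest (m := m) (by linarith)
  unfold mualemKrDeriv
  fun_prop (disch := linarith)

end

theorem tendsto_const_mul_abs_nhdsNE_zero {α : ℝ} (hα : 0 < α) :
    Tendsto (fun x : ℝ => α * |x|) (𝓝[≠] 0) (𝓝[>] 0) := by
  refine tendsto_nhdsWithin_iff.2 ⟨?_, eventually_nhdsWithin_of_forall fun x hx ↦ ?_⟩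
  · have hc : Continuous fun x : ℝ => α * |x| := by fun_prop
    exact (hc.tendsto' 0 0 (by simp)).mono_left nhdsWithin_le_nhds
  · exact mul_pos hα (abs_pos.2 hx)

theorem mualem_vanGenuchten_Kr_derivative_at_zero_general (α n m : ℝ) (hα : 0 < α) (hn : 1 < n)
    (Kr : ℝ → ℝ)
    (hKr : ∀ ψ : ℝ, Kr ψ =
      (1 - (α * |ψ|) ^ (n - 1) * (1 + (α * |ψ|) ^ n) ^ (-m)) ^ 2
        / (1 + (α * |ψ|) ^ n) ^ (m / 2)) :
    (n < 2 → Tendsto (fun ψ => |deriv Kr ψ|) (nhdsWithin 0 (Iio 0)) atTop) ∧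
    (2 ≤ n → ∃ C : ℝ, ∀ᶠ ψ in nhdsWithin (0:ℝ) (Iio 0), |deriv Kr ψ| ≤ C) := by
  have hKr' : Kr = mualemKr n m ∘ fun ψ => α * |ψ| := funext hKr
  have hDeriv : ∀ᶠ ψ in 𝓝[<] 0, |deriv Kr ψ| = α * |mualemKrDeriv n m (α * |ψ|)| := by
    filter_upwards [self_mem_nhdsWithin] with ψ (hψ : ψ < 0)
    have h := (hasDerivAt_mualemKr (n := n) (m := m) (mul_pos hα (abs_pos.2 hψ.ne))).comp ψ
      ((hasDerivAt_abs_neg hψ).const_mul α)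
    rw [hKr', h.deriv, abs_mul, abs_mul, abs_neg, abs_one, mul_one, abs_of_pos hα, mul_comm]
  have hScale : Tendsto (fun ψ : ℝ => α * |ψ|) (𝓝[<] 0) (𝓝[>] 0) :=
    (tendsto_const_mul_abs_nhdsNE_zero hα).mono_left (nhdsWithin_mono _ fun _ h ↦ ne_of_lt h)
  refine ⟨fun hn2 ↦ ?_, fun hn2 ↦ ?_⟩
  · refine ((tendsto_abs_atBot_atTop.comp
      ((tendsto_mualemKrDeriv_atBot (m := m) hn hn2).comp hScale)).const_mul_atTop hα).congr' ?_
    exact hDeriv.mono fun _ h ↦ h.symm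
  · have hLim := ((continuousAt_mualemKrDeriv (m := m) hn2).tendsto.mono_left
      nhdsWithin_le_nhds).comp hScale
    refine ⟨α * |mualemKrDeriv n m 0| + 1, ?_⟩
    filter_upwards [hDeriv, (hLim.abs.const_mul α).eventually_le_const (lt_add_one _)]
      with ψ hEq hLe
    exact hEq ▸ hLe

/-- The van Genuchten–Mualem relative permeability, as a function of the pressure head,
has an unbounded one-sided derivative as `ψ → 0⁻` when `1 < n < 2` (hence `K_r` is not
differentiable at `ψ = 0`), while the derivative stays bounded near `0⁻` when `n ≥ 2`. -/
theorem mualem_vanGenuchten_Kr_derivative_at_zero (α n m : ℝ) (hα : 0 < α) (hn : 1 < n)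
    (hm : m = 1 - 1 / n) (Kr : ℝ → ℝ)
    (hKr : ∀ ψ : ℝ, Kr ψ =
      (1 - (α * |ψ|) ^ (n - 1) * (1 + (α * |ψ|) ^ n) ^ (-m)) ^ 2
        / (1 + (α * |ψ|) ^ n) ^ (m / 2)) :
    (n < 2 → Tendsto (fun ψ => |deriv Kr ψ|) (nhdsWithin 0 (Iio 0)) atTop) ∧
    (2 ≤ n → ∃ C : ℝ, ∀ᶠ ψ in nhdsWithin (0:ℝ) (Iio 0), |deriv Kr ψ| ≤ C) :=
  mualem_vanGenuchten_Kr_derivative_at_zero_general α n m hα hn Kr hKr
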